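/- Let K be a field and b, c ∈ K such that the Kubert-Tate curve E(b,c) has nonzero discriminant. Then the point (0,0) on E(b,c) has order exactly 6 if and only if b = c + c². -/

import Mathlib

/-!
Tangent and chord computations give 2P = (b, bc) and 3P = (c, b - c) for P = (0, 0). As 2P and 3P
are affine points, P has order 6 exactly when 3P + 3P = 0, i.e. when 3P = -3P = (c, c²); that is,
when b - c = c².
-/

/-- The Kubert-Tate normal form curve E(b,c) : y^2 + (1-c)xy - by = x^3 - bx^2. -/
def Ebc {K : Type*} [CommRing K] (b c : K) : WeierstrassCurve.Affine K :=
  { a₁ := 1 - c, a₂ := -b, a₃ := -b, a₄ := 0, a₆ := 0 }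
/-- The point (0, 0) on E(b,c), nonsingular since the discriminant is nonzero. -/
noncomputable def P₀ {K : Type*} [Field K] (b c : K) (hΔ : (Ebc b c).Δ ≠ 0) :
    WeierstrassCurve.Affine.Point (Ebc b c) :=
  .some 0 0 ((WeierstrassCurve.Affine.equation_iff_nonsingular_of_Δ_ne_zero hΔ).mp
    (WeierstrassCurve.Affine.equation_zero.mpr rfl))

open WeierstrassCurve Affine Point

lemma addOrderOf_eq_six_iff {G : Type*} [AddMonoid G] {x : G} :
    addOrderOf x = 6 ↔ 6 • x = 0 ∧ 2 • x ≠ 0 ∧ 3 • x ≠ 0 := by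
  refine ⟨fun h ↦ ⟨h ▸ addOrderOf_nsmul_eq_zero x, ?_, ?_⟩, fun ⟨h6, h2, h3⟩ ↦ ?_⟩
  · rw [Ne, ← addOrderOf_dvd_iff_nsmul_eq_zero, h]; norm_num
  · rw [Ne, ← addOrderOf_dvd_iff_nsmul_eq_zero, h]; norm_num
  · refine addOrderOf_eq_of_nsmul_and_div_prime_nsmul (by norm_num) h6 fun p hp hdvd ↦ ?_
    have : p ≤ 6 := Nat.le_of_dvd (by norm_num) hdvd
    interval_cases p <;> simp_all <;> norm_num at hp

lemma WeierstrassCurve.Affine.Point.some_add_self_eq_zero_iff {F : Type*} [Field F]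
    [DecidableEq F] {W : WeierstrassCurve.Affine F} {x y : F} (h : W.Nonsingular x y) :
    some x y h + some x y h = 0 ↔ y = W.negY x y := by
  by_cases hy : y = W.negY x y
  · exact iff_of_true (add_self_of_Y_eq hy) hy
  · exact iff_of_false (add_self_of_Y_ne hy ▸ some_ne_zero _) hy

section Ebc

variable {K : Type*} [Field K] (b c : K)

lemma Ebc_Δ : (Ebc b c).Δ =
    b ^ 3 * (16 * b ^ 2 - b * (8 * c ^ 2 + 20 * c - 1) - c * (1 - c) ^ 3) := by
  simp only [Ebc, WeierstrassCurve.Δ, WeierstrassCurve.b₂, WeierstrassCurve.b₄,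
    WeierstrassCurve.b₆, WeierstrassCurve.b₈]
  ring

lemma Ebc_negY (x y : K) : (Ebc b c).negY x y = -y - (1 - c) * x + b := by
  simp [WeierstrassCurve.Affine.negY, Ebc]

lemma Ebc_b_ne_zero (hΔ : (Ebc b c).Δ ≠ 0) : b ≠ 0 := by
  rintro rfl
  exact hΔ (by rw [Ebc_Δ]; ring)

variable {b c} (hΔ : (Ebc b c).Δ ≠ 0)
include hΔ

lemma Ebc_nonsingular_b_mul : (Ebc b c).Nonsingular b (b * c) :=
  (equation_iff_nonsingular_of_Δ_ne_zero hΔ).mp <| by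
    rw [equation_iff]; simp only [Ebc]; ring

lemma Ebc_nonsingular_sub : (Ebc b c).Nonsingular c (b - c) :=
  (equation_iff_nonsingular_of_Δ_ne_zero hΔ).mp <| by
    rw [equation_iff]; simp only [Ebc]; ring

variable [DecidableEq K]

lemma two_nsmul_P₀ : 2 • P₀ b c hΔ = some b (b * c) (Ebc_nonsingular_b_mul hΔ) := by
  have hy : (0 : K) ≠ (Ebc b c).negY 0 0 := by
    rw [Ebc_negY]; simpa using (Ebc_b_ne_zero b c hΔ).symm
  have hslope : (Ebc b c).slope 0 0 0 0 = 0 := by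
    rw [slope_of_Y_ne rfl hy]; simp only [Ebc]; ring
  rw [two_nsmul, P₀, add_self_of_Y_ne hy, Point.some.injEq, hslope]
  constructor <;> simp only [addX, addY, negAddY, negY, Ebc] <;> ring

lemma three_nsmul_P₀ : 3 • P₀ b c hΔ = some c (b - c) (Ebc_nonsingular_sub hΔ) := by
  have hb := Ebc_b_ne_zero b c hΔ
  have hslope : (Ebc b c).slope b 0 (b * c) 0 = c := by
    rw [slope_of_X_ne hb]; field_simp; ring
  rw [succ_nsmul, two_nsmul_P₀, P₀, add_of_X_ne hb, Point.some.injEq, hslope]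
  constructor <;> simp only [addX, addY, negAddY, negY, Ebc] <;> ring

end Ebc

open Classical in
theorem stmt_7 {K : Type*} [Field K] (b c : K) (hΔ : (Ebc b c).Δ ≠ 0) :
    addOrderOf (P₀ b c hΔ) = 6 ↔ b = c + c ^ 2 := by
  rw [addOrderOf_eq_six_iff, show 6 = 3 + 3 from rfl, add_nsmul, three_nsmul_P₀,
    two_nsmul_P₀, some_add_self_eq_zero_iff, Ebc_negY]
  simp only [ne_eq, some_ne_zero, not_false_eq_true, and_true]
  constructor <;> intro h <;> linear_combination h
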